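/- Let k, m be positive integers and let P be an element of the polynomial ring ℤ[v₁,…,v_k]. Then the set of matrices (μ_{ij}) ∈ ℤ^{m×k} such that Σ_{i=1}^m (Σ_{j=1}^k μ_{ij} v_j)² = P (as polynomials) is finite. -/
import Mathlib

open MvPolynomial

lemma single_add_single_eq_single_two {k : ℕ} (l l' j : Fin k) :
    (Finsupp.single l 1 + Finsupp.single l' 1 = Finsupp.single j 2) ↔ (l = j ∧ l' = j) := by
  constructor
  · intro h
    have h1 := DFunLike.congr_fun h l
    have h2 := DFunLike.congr_fun h l'
    simp only [Finsupp.add_apply, Finsupp.single_apply] at h1 h2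
    constructor
    · by_contra hlj
      simp [hlj] at h1
      split_ifs at h1 <;> omega
    · by_contra hlj
      simp [hlj] at h2
      split_ifs at h2 <;> omega
  · rintro ⟨rfl, rfl⟩
    ext a
    simp [Finsupp.single_apply]
    split_ifs <;> omega

lemma coeff_square_sum {k : ℕ} (c : Fin k → ℤ) (j : Fin k) :
    MvPolynomial.coeff (Finsupp.single j 2)
      ((∑ l : Fin k, MvPolynomial.C (c l) * MvPolynomial.X l) ^ 2) = (c j) ^ 2 := by
  rw [sq, Finset.sum_mul_sum]
  rw [MvPolynomial.coeff_sum]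
  have : ∀ l l' : Fin k,
      MvPolynomial.coeff (Finsupp.single j 2)
        ((MvPolynomial.C (c l) * MvPolynomial.X l) * (MvPolynomial.C (c l') * MvPolynomial.X l'))
      = if l = j ∧ l' = j then c l * c l' else 0 := by
    intro l l'
    have hX : (MvPolynomial.C (c l) * MvPolynomial.X l) * (MvPolynomial.C (c l') * MvPolynomial.X l')
        = MvPolynomial.monomial (Finsupp.single l 1 + Finsupp.single l' 1) (c l * c l') := by
      rw [MvPolynomial.C_mul_X_eq_monomial, MvPolynomial.C_mul_X_eq_monomial,
        MvPolynomial.monomial_mul]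
    rw [hX, MvPolynomial.coeff_monomial]
    simp [single_add_single_eq_single_two]
  simp only [MvPolynomial.coeff_sum, this]
  simp [ite_and, Finset.sum_ite_eq', sq]

/-- For positive integers `k, m` and a polynomial `P ∈ ℤ[v₁,…,v_k]`,
the set of integer matrices `(μ i j)` with `∑ i, (∑ j, μ i j • v j)² = P` is finite. -/
theorem finite_matrices_sum_of_squares_eq (k m : ℕ) (hk : 0 < k) (hm : 0 < m)
    (P : MvPolynomial (Fin k) ℤ) :
    {μ : Matrix (Fin m) (Fin k) ℤ |
      ∑ i : Fin m, (∑ j : Fin k, MvPolynomial.C (μ i j) * MvPolynomial.X j) ^ 2 = P}.Finite := by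
  set N : Fin k → ℤ := fun j => P.coeff (Finsupp.single j 2) with hN
  have hfin : (Set.pi Set.univ fun i : Fin m =>
      Set.pi Set.univ fun j : Fin k => (Finset.Icc (-(N j)) (N j) : Set ℤ)).Finite :=
    Set.Finite.pi fun i => Set.Finite.pi fun j => (Finset.Icc _ _).finite_toSet
  refine hfin.subset ?_
  intro μ hμ
  have key : ∀ j : Fin k, ∑ i : Fin m, (μ i j) ^ 2 = N j := by
    intro j
    have hμ' : ∑ i : Fin m, (∑ j : Fin k, MvPolynomial.C (μ i j) * MvPolynomial.X j) ^ 2 = P := hμ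
    show ∑ i : Fin m, μ i j ^ 2 = MvPolynomial.coeff (Finsupp.single j 2) P
    rw [← hμ', MvPolynomial.coeff_sum]
    exact Finset.sum_congr rfl fun i _ => (coeff_square_sum (μ i) j).symm
  rw [Set.mem_pi]
  intro i _
  rw [Set.mem_pi]
  intro j _
  rw [Finset.coe_Icc, Set.mem_Icc]
  have hle : (μ i j) ^ 2 ≤ N j := by
    rw [← key j]
    exact Finset.single_le_sum (fun i _ => sq_nonneg (μ i j)) (Finset.mem_univ i)
  constructor <;> nlinarith [sq_nonneg (μ i j), sq_nonneg (μ i j + 1), sq_nonneg (μ i j - 1)]
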